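/- arXiv:2412.10837 — 2 statements merged into one kernel-verified Lean document; each statement's English description precedes it below -/
import Mathlib

section
/- For l+k ≥ 1, the dimension of Hom_{S_n}((ℝⁿ)^{⊗k}, (ℝⁿ)^{⊗l}) over ℝ equals the number of set partitions of a set of l+k elements into at most n blocks, i.e. Σ_{t=1}^{n} S(l+k, t), where S(l+k, t) denotes the Stirling number of the second kind. -/
open Classical
noncomputable section

/-- The `k`-th tensor (Kronecker) power of an `n × n` real matrix. -/
def tensorPow (n k : ℕ) (g : Matrix (Fin n) (Fin n) ℝ) :
    Matrix (Fin k → Fin n) (Fin k → Fin n) ℝ :=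
  Matrix.of fun I J => ∏ i, g (I i) (J i)

/-- The permutation matrix of `σ ∈ S_n`, sending `e_j` to `e_{σ j}`. -/
def permMat (n : ℕ) (σ : Equiv.Perm (Fin n)) : Matrix (Fin n) (Fin n) ℝ :=
  Matrix.of fun i j => if i = σ j then (1 : ℝ) else 0

/-- The space `Hom_{S_n}((ℝⁿ)^{⊗k}, (ℝⁿ)^{⊗l})` of `S_n`-equivariant linear maps,
as a submodule of the space of matrices. -/
def equivSubmodule (n k l : ℕ) :
    Submodule ℝ (Matrix (Fin l → Fin n) (Fin k → Fin n) ℝ) where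
  carrier := {φ | ∀ σ : Equiv.Perm (Fin n),
    tensorPow n l (permMat n σ) * φ = φ * tensorPow n k (permMat n σ)}
  add_mem' := by
    intro a b ha hb σ
    rw [Matrix.mul_add, Matrix.add_mul, ha σ, hb σ]
  zero_mem' := by
    intro σ
    rw [Matrix.mul_zero, Matrix.zero_mul]
  smul_mem' := by
    intro c a ha σ
    rw [Matrix.mul_smul, Matrix.smul_mul, ha σ]

/-- Stirling numbers of the second kind: `stirling2 m t` counts the set partitions of
an `m`-element set into exactly `t` blocks. -/
def stirling2 : ℕ → ℕ → ℕ
  | 0, 0 => 1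
  | 0, _ + 1 => 0
  | _ + 1, 0 => 0
  | m + 1, t + 1 => (t + 1) * stirling2 m (t + 1) + stirling2 m t

/-!
Concatenating row and column indices identifies a matrix `φ` with a function of
`F : Fin (l + k) → Fin n`, and `φ` is equivariant exactly when this function is invariant under
`F ↦ σ ∘ F`. So the dimension is the number of `S_n`-orbits on `Fin (l + k) → Fin n`. Two maps lie
in the same orbit iff they have the same fibres, and the fibre partitions that occur are exactly
the partitions with at most `n` blocks. Finally, a partition of `Fin (m + 1)` is a partition of
`Fin m` together with either a new block for the last point or one of the old blocks for it to
join; this is the recursion of `stirling2`.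
-/

open MulAction

section InvariantFunctions

variable (R M G X : Type*) [Semiring R] [AddCommMonoid M] [Module R M] [Group G] [MulAction G X]

def invariantFunctions : Submodule R (X → M) where
  carrier := {f | ∀ (g : G) x, f (g • x) = f x}
  add_mem' hf hg g x := by simp only [Pi.add_apply, hf g x, hg g x]
  zero_mem' _ _ := rfl
  smul_mem' c f hf g x := by simp only [Pi.smul_apply, hf g x]

variable {R M G X} in
theorem mem_invariantFunctions {f : X → M} :
    f ∈ invariantFunctions R M G X ↔ ∀ (g : G) x, f (g • x) = f x :=
  Iff.rfl

theorem range_funLeft_orbitRel_mk :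
    LinearMap.range (LinearMap.funLeft R M (Quotient.mk (orbitRel G X))) =
      invariantFunctions R M G X := by
  ext f
  constructor
  · rintro ⟨f, rfl⟩ g x
    exact congrArg f (Quotient.sound (mem_orbit _ g))
  · intro hf
    refine ⟨Quotient.lift f ?_, rfl⟩
    rintro _ x ⟨g, rfl⟩
    exact hf g x

end InvariantFunctions

theorem finrank_invariantFunctions (R G X : Type*) [Ring R] [StrongRankCondition R] [Group G]
    [MulAction G X] [Finite X] :
    Module.finrank R (invariantFunctions R R G X) = Nat.card (orbitRel.Quotient G X) := by
  have := Fintype.ofFinite (orbitRel.Quotient G X)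
  rw [← range_funLeft_orbitRel_mk, LinearMap.finrank_range_of_inj
    (LinearMap.funLeft_injective_of_surjective _ _ _ Quotient.mk_surjective),
    Module.finrank_fintype_fun_eq_card, Nat.card_eq_fintype_card]

open Equiv Finset

theorem tensorPow_permMat_apply (n k : ℕ) (σ : Perm (Fin n)) (I J : Fin k → Fin n) :
    tensorPow n k (permMat n σ) I J = if I = σ • J then 1 else 0 := by
  simp only [tensorPow, permMat, Matrix.of_apply, prod_boole, mem_univ,
    true_implies, funext_iff, Pi.smul_apply, Perm.smul_def]

theorem tensorPow_permMat_mul_apply (n k l : ℕ) (σ : Perm (Fin n))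
    (φ : Matrix (Fin l → Fin n) (Fin k → Fin n) ℝ) (I : Fin l → Fin n) (J : Fin k → Fin n) :
    (tensorPow n l (permMat n σ) * φ) I J = φ (σ⁻¹ • I) J := by
  simp [Matrix.mul_apply, tensorPow_permMat_apply, ← inv_smul_eq_iff]

theorem mul_tensorPow_permMat_apply (n k l : ℕ) (σ : Perm (Fin n))
    (φ : Matrix (Fin l → Fin n) (Fin k → Fin n) ℝ) (I : Fin l → Fin n) (J : Fin k → Fin n) :
    (φ * tensorPow n k (permMat n σ)) I J = φ I (σ • J) := by
  simp [Matrix.mul_apply, tensorPow_permMat_apply]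

theorem mem_equivSubmodule_iff (n k l : ℕ) (φ : Matrix (Fin l → Fin n) (Fin k → Fin n) ℝ) :
    φ ∈ equivSubmodule n k l ↔ ∀ (σ : Perm (Fin n)) I J, φ (σ • I) (σ • J) = φ I J := by
  refine forall_congr' fun σ => ?_
  simp only [← Matrix.ext_iff, tensorPow_permMat_mul_apply, mul_tensorPow_permMat_apply]
  constructor
  · intro h I J
    simpa using (h (σ • I) J).symm
  · intro h I J
    simpa using (h (σ⁻¹ • I) J).symm

theorem Fin.appendEquiv_smul {M α : Type*} [SMul M α] {m n : ℕ} (c : M)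
    (x : (Fin m → α) × (Fin n → α)) : Fin.appendEquiv m n (c • x) = c • Fin.appendEquiv m n x := by
  ext i
  induction i using Fin.addCases <;> simp

def matrixEquivFun (n k l : ℕ) :
    Matrix (Fin l → Fin n) (Fin k → Fin n) ℝ ≃ₗ[ℝ] ((Fin (l + k) → Fin n) → ℝ) :=
  (LinearEquiv.curry ℝ ℝ _ _).symm ≪≫ₗ LinearEquiv.funCongrLeft ℝ ℝ (Fin.appendEquiv l k).symm

theorem matrixEquivFun_apply_appendEquiv (n k l : ℕ)
    (φ : Matrix (Fin l → Fin n) (Fin k → Fin n) ℝ) (x : (Fin l → Fin n) × (Fin k → Fin n)) :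
    matrixEquivFun n k l φ (Fin.appendEquiv l k x) = φ x.1 x.2 := by
  change Function.uncurry φ ((Fin.appendEquiv l k).symm (Fin.appendEquiv l k x)) = _
  rw [Equiv.symm_apply_apply]
  rfl

theorem equivSubmodule_eq_comap (n k l : ℕ) :
    equivSubmodule n k l = (invariantFunctions ℝ ℝ (Perm (Fin n)) (Fin (l + k) → Fin n)).comap
      (matrixEquivFun n k l).toLinearMap := by
  ext φ
  simp only [mem_equivSubmodule_iff, Submodule.mem_comap, LinearEquiv.coe_coe,
    mem_invariantFunctions, (Fin.appendEquiv l k).surjective.forall, ← Fin.appendEquiv_smul,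
    matrixEquivFun_apply_appendEquiv, Prod.forall, Prod.smul_mk]

instance Setoid.finite {α : Type*} [Finite α] : Finite (Setoid α) :=
  Finite.of_injective (fun s : Setoid α => (s : α → α → Prop)) fun _ _ h =>
    Setoid.ext fun a b => Iff.of_eq (congrFun₂ h a b)

instance {α : Type*} [Finite α] : Fintype (Setoid α) := Fintype.ofFinite _

section Kernels

variable {α β : Type*}

theorem orbitRel_perm_eq_ker_ker [Finite α] :
    orbitRel (Perm β) (α → β) = Setoid.ker (Setoid.ker : (α → β) → Setoid α) := by
  ext f g
  rw [orbitRel_apply, Setoid.ker_def]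
  constructor
  · rintro ⟨σ, rfl⟩
    ext a b
    simp [Setoid.ker_def]
  · intro h
    obtain ⟨σ, hσ⟩ := Perm.exists_extending_pair (Setoid.kerLift g)
      (Quotient.lift (s := Setoid.ker g) f h.ge) (Setoid.kerLift_injective g)
      ((Setoid.lift_injective_iff_ker_eq_of_le h.ge).2 h)
    exact ⟨σ, funext fun a => hσ ⟦a⟧⟩

theorem Setoid.range_ker [Finite α] [Finite β] :
    Set.range (Setoid.ker : (α → β) → Setoid α) = {s | Nat.card (Quotient s) ≤ Nat.card β} := by
  ext s
  constructor
  · rintro ⟨f, rfl⟩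
    exact Nat.card_le_card_of_injective _ (Setoid.kerLift_injective f)
  · intro (hs : Nat.card (Quotient s) ≤ Nat.card β)
    have := Fintype.ofFinite (Quotient s)
    have := Fintype.ofFinite β
    rw [Nat.card_eq_fintype_card, Nat.card_eq_fintype_card] at hs
    obtain ⟨e⟩ := Function.Embedding.nonempty_of_card_le hs
    refine ⟨e ∘ Quotient.mk s, ?_⟩
    ext a b
    simp [Setoid.ker_def, e.injective.eq_iff, Quotient.eq]

theorem card_orbitRel_quotient_perm [Finite α] [Finite β] :
    Nat.card (orbitRel.Quotient (Perm β) (α → β)) =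
      #{s : Setoid α | Nat.card (Quotient s) ≤ Nat.card β} := by
  rw [orbitRel.Quotient, orbitRel_perm_eq_ker_ker, Nat.card_congr (Setoid.quotientKerEquivRange _),
    Setoid.range_ker, Nat.card_eq_card_toFinset, Set.toFinset_ofPred]

end Kernels

namespace Setoid

variable {m : ℕ}

/-- The last point joins the class `o`, or forms a class of its own if `o = none`. -/
def extendLast (s : Setoid (Fin m)) (o : Option (Quotient s)) : Setoid (Fin (m + 1)) :=
  ker (Fin.snoc (α := fun _ => Option (Quotient s)) (some ∘ Quotient.mk s) o)

theorem extendLast_castSucc_castSucc (s : Setoid (Fin m)) (o : Option (Quotient s))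
    (i j : Fin m) : extendLast s o i.castSucc j.castSucc ↔ s i j := by
  rw [extendLast, ker_def]
  simp [Quotient.eq]

theorem extendLast_last_castSucc (s : Setoid (Fin m)) (o : Option (Quotient s)) (j : Fin m) :
    extendLast s o (Fin.last m) j.castSucc ↔ o = some ⟦j⟧ := by
  rw [extendLast, ker_def]
  simp

theorem comap_castSucc_extendLast (s : Setoid (Fin m)) (o : Option (Quotient s)) :
    (extendLast s o).comap Fin.castSucc = s :=
  ext (extendLast_castSucc_castSucc s o)

theorem extendLast_injective (s : Setoid (Fin m)) : Function.Injective (extendLast s) := by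
  intro o₁ o₂ h
  refine Option.ext fun q => Quotient.inductionOn q fun j => ?_
  rw [← extendLast_last_castSucc, h, extendLast_last_castSucc]

theorem eq_of_castSucc_iff_of_last_castSucc_iff {s t : Setoid (Fin (m + 1))}
    (hcc : ∀ i j : Fin m, s i.castSucc j.castSucc ↔ t i.castSucc j.castSucc)
    (hlc : ∀ j : Fin m, s (Fin.last m) j.castSucc ↔ t (Fin.last m) j.castSucc) : s = t := by
  ext x y
  induction x using Fin.lastCases <;> induction y using Fin.lastCases
  · exact iff_of_true (s.refl _) (t.refl _)
  · exact hlc _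
  · exact ⟨fun h => t.symm ((hlc _).1 (s.symm h)), fun h => s.symm ((hlc _).2 (t.symm h))⟩
  · exact hcc _ _

theorem exists_extendLast_eq (t : Setoid (Fin (m + 1))) :
    ∃ o, extendLast (t.comap Fin.castSucc) o = t := by
  by_cases h : ∃ i : Fin m, t (Fin.last m) i.castSucc
  · obtain ⟨i, hi⟩ := h
    refine ⟨some ⟦i⟧, eq_of_castSucc_iff_of_last_castSucc_iff
      (extendLast_castSucc_castSucc _ _) fun j => ?_⟩
    rw [extendLast_last_castSucc, Option.some_inj, Quotient.eq, comap_rel]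
    exact ⟨t.trans hi, t.trans (t.symm hi)⟩
  · refine ⟨none, eq_of_castSucc_iff_of_last_castSucc_iff
      (extendLast_castSucc_castSucc _ _) fun j => ?_⟩
    rw [extendLast_last_castSucc]
    exact iff_of_false (by simp) (not_exists.mp h j)

theorem card_quotient_extendLast_none (s : Setoid (Fin m)) :
    Nat.card (Quotient (extendLast s none)) = Nat.card (Quotient s) + 1 := by
  rw [extendLast, Nat.card_congr (quotientKerEquivRange _), Fin.range_snoc,
    Quotient.mk_surjective.range_comp some, Set.insert_none_range_some, Nat.card_univ,
    Finite.card_option]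

theorem card_quotient_extendLast_some (s : Setoid (Fin m)) (q : Quotient s) :
    Nat.card (Quotient (extendLast s (some q))) = Nat.card (Quotient s) := by
  rw [extendLast, Nat.card_congr (quotientKerEquivRange _), Fin.range_snoc,
    Quotient.mk_surjective.range_comp some, Set.insert_eq_of_mem (Set.mem_range_self q),
    Nat.card_range_of_injective (Option.some_injective _)]

variable (m) in
def sigmaOptionEquivFinSucc : (Σ s : Setoid (Fin m), Option (Quotient s)) ≃ Setoid (Fin (m + 1)) :=
  Equiv.ofBijective (fun p => extendLast p.1 p.2) <| by
    refine ⟨?_, fun t => ⟨⟨_, _⟩, (exists_extendLast_eq t).choose_spec⟩⟩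
    rintro ⟨s₁, o₁⟩ ⟨s₂, o₂⟩ (h : extendLast s₁ o₁ = extendLast s₂ o₂)
    obtain rfl : s₁ = s₂ := by
      rw [← comap_castSucc_extendLast s₁ o₁, h, comap_castSucc_extendLast]
    rw [extendLast_injective s₁ h]

theorem sigmaOptionEquivFinSucc_apply (p : Σ s : Setoid (Fin m), Option (Quotient s)) :
    sigmaOptionEquivFinSucc m p = extendLast p.1 p.2 :=
  rfl

end Setoid

theorem card_setoid_fin_eq_stirling2 (m t : ℕ) :
    #{s : Setoid (Fin m) | Nat.card (Quotient s) = t} = stirling2 m t := by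
  induction m generalizing t with
  | zero =>
    have hunique : Fintype.card (Setoid (Fin 0)) = 1 :=
      Fintype.card_eq_one_iff.2 ⟨⊥, fun s => Setoid.ext fun a => a.elim0⟩
    cases t <;> simp [hunique, stirling2]
  | succ m ih =>
    cases t with
    | zero =>
      exact card_eq_zero.2 (filter_eq_empty_iff.2 fun s _ => Nat.card_pos.ne')
    | succ u =>
      rw [card_filter, ← (Setoid.sigmaOptionEquivFinSucc m).sum_comp, Fintype.sum_sigma]
      simp only [Setoid.sigmaOptionEquivFinSucc_apply, Fintype.sum_option,
        Setoid.card_quotient_extendLast_none, Setoid.card_quotient_extendLast_some, sum_const,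
        card_univ, smul_eq_mul, add_left_inj]
      have hterm (s : Setoid (Fin m)) :
          Fintype.card (Quotient s) * (if Nat.card (Quotient s) = u + 1 then 1 else 0) =
            (u + 1) * if Nat.card (Quotient s) = u + 1 then 1 else 0 := by
        rw [← Nat.card_eq_fintype_card]
        split_ifs with h
        · rw [h]
        · rfl
      simp only [hterm, sum_add_distrib, ← mul_sum, ← card_filter, ih, stirling2]
      ring

theorem card_setoid_fin_le_eq_sum_stirling2 {m : ℕ} (hm : 0 < m) (n : ℕ) :
    #{s : Setoid (Fin m) | Nat.card (Quotient s) ≤ n} = ∑ t ∈ Icc 1 n, stirling2 m t := by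
  have : NeZero m := ⟨hm.ne'⟩
  rw [card_eq_sum_card_fiberwise (f := fun s => Nat.card (Quotient s)) (t := Icc 1 n)]
  · refine sum_congr rfl fun t ht => ?_
    rw [filter_filter, ← card_setoid_fin_eq_stirling2]
    congr 1
    ext s
    simp only [mem_filter, mem_univ, true_and, and_iff_right_iff_imp]
    rintro rfl
    exact (mem_Icc.1 ht).2
  · intro s hs
    exact mem_Icc.2 ⟨Nat.card_pos, (mem_filter.1 hs).2⟩

theorem finrank_equivSubmodule_general (n k l : ℕ) (hlk : 1 ≤ l + k) :
    Module.finrank ℝ (equivSubmodule n k l) = ∑ t ∈ Finset.Icc 1 n, stirling2 (l + k) t := by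
  rw [equivSubmodule_eq_comap, Submodule.comap_equiv_eq_map_symm, LinearEquiv.finrank_map_eq,
    finrank_invariantFunctions, card_orbitRel_quotient_perm, Nat.card_fin,
    card_setoid_fin_le_eq_sum_stirling2 hlk]

/-- for `l + k ≥ 1`, the dimension of `Hom_{S_n}((ℝⁿ)^{⊗k}, (ℝⁿ)^{⊗l})`
over `ℝ` equals `Σ_{t=1}^{n} S(l+k, t)`, the number of set partitions of a set of
`l+k` elements into at most `n` blocks. -/
theorem finrank_equivSubmodule (n k l : ℕ) (hn : 0 < n) (hlk : 1 ≤ l + k) :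
    Module.finrank ℝ (equivSubmodule n k l) = ∑ t ∈ Finset.Icc 1 n, stirling2 (l + k) t :=
  finrank_equivSubmodule_general n k l hlk
end
end

section
/- For every (k,l)-Brauer diagram, i.e. every perfect matching β of [l+k], the linear map E_β : (ℝⁿ)^{⊗k} → (ℝⁿ)^{⊗l} is O(n)-equivariant: g^{⊗l} ∘ E_β = E_β ∘ g^{⊗k} for every orthogonal matrix g ∈ O(n). -/
open Classical
noncomputable section

/-- The matrix `D_π : (ℝⁿ)^{⊗k} → (ℝⁿ)^{⊗l}` associated to a set partition `π` of
`[l+k]` (encoded as a setoid on `Fin (l+k)`, top row first). -/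
def Dmat (n l k : ℕ) (π : Setoid (Fin (l + k))) :
    Matrix (Fin l → Fin n) (Fin k → Fin n) ℝ :=
  Matrix.of fun I J =>
    if ∀ x y, π.r x y → Fin.append I J x = Fin.append I J y then (1 : ℝ) else 0

/-- The set partition whose blocks are the pairs `{x, f x}` of a (fixed-point-free)
involution `f`, i.e. a perfect matching of `Fin N`. -/
def matchingSetoid {N : ℕ} (f : Fin N → Fin N) (hf : ∀ x, f (f x) = x) : Setoid (Fin N) where
  r x y := y = x ∨ y = f x
  iseqv := by
    constructor
    · intro x; exact Or.inl rfl
    · rintro x y (rfl | rfl)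
      · exact Or.inl rfl
      · right; rw [hf]
    · rintro x y z (rfl | rfl) h
      · exact h
      · rcases h with rfl | rfl
        · right; rfl
        · left; rw [hf]

/-
Since `Dmat π I J = e_π (I ++ J)`, where `e_π = partitionTensor π` is the indicator of the
functions constant on the blocks of `π`, and `(g^{⊗k})ᵀ g^{⊗k} = 1`, the claim amounts to
`g^{⊗(l+k)} e_β = e_β`. Functions constant on the blocks are functions on the quotient, so the sum
defining `g^{⊗(l+k)} e_β` factorises over the blocks, and a block `{a, b}` contributes
`∑ c, g (V a) c * g (V b) c = δ (V a) (V b)` because the rows of an orthogonal matrix are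
orthonormal.
-/

open Finset Matrix

theorem sum_prod_apply_eq_ite_of_mul_transpose_eq_one {ι m R : Type*} [Fintype m]
    [DecidableEq m] [CommSemiring R] {g : Matrix m m R}
    (hg : g * gᵀ = 1) (V : ι → m) {s : Finset ι} (hs : #s = 2)
    [Decidable (∀ x ∈ s, ∀ y ∈ s, V x = V y)] :
    ∑ c, ∏ x ∈ s, g (V x) c = if ∀ x ∈ s, ∀ y ∈ s, V x = V y then 1 else 0 := by
  obtain ⟨a, b, hab, rfl⟩ := card_eq_two.mp hs
  have hrows : ∑ c, g (V a) c * g (V b) c = (1 : Matrix m m R) (V a) (V b) := by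
    rw [← hg, Matrix.mul_apply]
    rfl
  simp only [prod_pair hab, hrows, Matrix.one_apply, mem_insert, mem_singleton]
  congr 1
  refine propext ⟨fun h x hx y hy => ?_, fun h => h a (Or.inl rfl) b (Or.inr rfl)⟩
  rcases hx with rfl | rfl <;> rcases hy with rfl | rfl <;> simp [h]

section PartitionTensor

def partitionTensor {ι m R : Type*} [Zero R] [One R] (π : Setoid ι) (V : ι → m) : R :=
  if ∀ x y, π.r x y → V x = V y then 1 else 0

variable {ι m R : Type*} [Fintype ι] [DecidableEq ι] [Fintype m] [CommSemiring R]

theorem sum_mul_partitionTensor (π : Setoid ι) (F : (ι → m) → R) :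
    ∑ W, F W * partitionTensor π W = ∑ w : Quotient π → m, F (w ∘ Quotient.mk π) := by
  have himage : univ.image (· ∘ Quotient.mk π) =
      ({W | ∀ x y, π.r x y → W x = W y} : Finset (ι → m)) := by
    ext W
    simp only [mem_image, mem_univ, true_and, mem_filter]
    constructor
    · rintro ⟨w, rfl⟩ x y hxy
      exact congrArg w (Quotient.sound hxy)
    · intro hW
      exact ⟨Quotient.lift W hW, rfl⟩
  rw [← sum_image fun _ _ _ _ h => (Quotient.mk_surjective (s := π)).injective_comp_right h,
    himage, sum_filter]
  simp only [partitionTensor, mul_ite, mul_one, mul_zero]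

theorem sum_prod_mul_partitionTensor [DecidableEq m] (π : Setoid ι)
    (hπ : ∀ x, #{y | π.r x y} = 2) {g : Matrix m m R} (hg : g * gᵀ = 1) (V : ι → m) :
    ∑ W, (∏ x, g (V x) (W x)) * partitionTensor π W = partitionTensor π V := by
  let fiber : Quotient π → Finset ι := fun q => {x | Quotient.mk π x = q}
  have hfiber : ∀ q, #(fiber q) = 2 := by
    refine Quotient.ind fun x => ?_
    rw [← hπ x]
    congr 1
    ext y
    simp only [fiber, mem_filter, mem_univ, true_and, Quotient.eq]
    exact ⟨π.symm, π.symm⟩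
  rw [sum_mul_partitionTensor]
  calc ∑ w : Quotient π → m, ∏ x, g (V x) (w (Quotient.mk π x))
      = ∑ w : Quotient π → m, ∏ q, ∏ x ∈ fiber q, g (V x) (w q) := by
        refine sum_congr rfl fun w _ => ?_
        rw [← prod_fiberwise univ (Quotient.mk π)]
        refine prod_congr rfl fun q _ => prod_congr rfl fun x hx => ?_
        rw [(mem_filter.mp hx).2]
    _ = ∏ q, ∑ c, ∏ x ∈ fiber q, g (V x) c :=
        (Fintype.prod_sum fun q c => ∏ x ∈ fiber q, g (V x) c).symm
    _ = ∏ q, if ∀ x ∈ fiber q, ∀ y ∈ fiber q, V x = V y then 1 else 0 :=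
        prod_congr rfl fun q _ => sum_prod_apply_eq_ite_of_mul_transpose_eq_one hg V (hfiber q)
    _ = partitionTensor π V := by
        rw [Fintype.prod_boole, partitionTensor]
        congr 1
        apply propext
        simp only [fiber, mem_filter, mem_univ, true_and]
        constructor
        · intro h x y hxy
          exact h _ x rfl y (Quotient.sound hxy).symm
        · rintro h q x rfl y hy
          exact h x y (Quotient.exact hy.symm)

end PartitionTensor

theorem card_matchingSetoid_rel_eq_two {N : ℕ} {f : Fin N → Fin N} (hf : ∀ x, f (f x) = x)
    (hf' : ∀ x, f x ≠ x) (x : Fin N) : #{y | (matchingSetoid f hf).r x y} = 2 := by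
  have : ({y | (matchingSetoid f hf).r x y} : Finset (Fin N)) = {x, f x} := by
    ext y
    simp only [mem_filter, mem_univ, true_and, mem_insert, mem_singleton]
    exact Iff.rfl
  rw [this, card_pair (hf' x).symm]

theorem tensorPow_mul (n k : ℕ) (g h : Matrix (Fin n) (Fin n) ℝ) :
    tensorPow n k (g * h) = tensorPow n k g * tensorPow n k h := by
  ext I J
  simp only [tensorPow, Matrix.mul_apply, Matrix.of_apply, Fintype.prod_sum, prod_mul_distrib]

theorem tensorPow_one (n k : ℕ) : tensorPow n k 1 = 1 := by
  ext I J
  simp only [tensorPow, Matrix.of_apply, Matrix.one_apply, Fintype.prod_boole, funext_iff]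
  congr

theorem tensorPow_transpose (n k : ℕ) (g : Matrix (Fin n) (Fin n) ℝ) :
    (tensorPow n k g)ᵀ = tensorPow n k gᵀ :=
  rfl

theorem Dmat_apply (n l k : ℕ) (π : Setoid (Fin (l + k))) (I : Fin l → Fin n)
    (J : Fin k → Fin n) : Dmat n l k π I J = partitionTensor π (Fin.append I J) := by
  rw [Dmat, Matrix.of_apply, partitionTensor]
  congr

theorem tensorPow_mul_Dmat_mul_transpose_apply (n l k : ℕ) (g : Matrix (Fin n) (Fin n) ℝ)
    (π : Setoid (Fin (l + k))) (I : Fin l → Fin n) (J : Fin k → Fin n) :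
    (tensorPow n l g * Dmat n l k π * (tensorPow n k g)ᵀ) I J =
      ∑ W, (∏ x, g (Fin.append I J x) (W x)) * partitionTensor π W := by
  rw [← (Fin.appendEquiv l k).sum_comp, Fintype.sum_prod_type, Finset.sum_comm]
  simp only [Matrix.mul_apply, Matrix.transpose_apply, tensorPow, Dmat_apply, Matrix.of_apply,
    Fin.appendEquiv_apply, Fin.prod_univ_add, Fin.append_left, Fin.append_right, sum_mul]
  refine sum_congr rfl fun B _ => sum_congr rfl fun A _ => ?_
  exact mul_right_comm _ _ _

theorem Ematrix_orthogonal_equivariant_general (n k l : ℕ)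
    (f : Fin (l + k) → Fin (l + k)) (hf : ∀ x, f (f x) = x) (hf' : ∀ x, f x ≠ x)
    (g : Matrix (Fin n) (Fin n) ℝ) (hg : g.transpose * g = 1) :
    tensorPow n l g * Dmat n l k (matchingSetoid f hf) =
      Dmat n l k (matchingSetoid f hf) * tensorPow n k g := by
  set D := Dmat n l k (matchingSetoid f hf)
  have hD : tensorPow n l g * D * (tensorPow n k g)ᵀ = D := by
    ext I J
    rw [tensorPow_mul_Dmat_mul_transpose_apply, sum_prod_mul_partitionTensor _
      (card_matchingSetoid_rel_eq_two hf hf') (mul_eq_one_comm.mp hg)]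
    exact (Dmat_apply n l k _ I J).symm
  calc tensorPow n l g * D = tensorPow n l g * D * ((tensorPow n k g)ᵀ * tensorPow n k g) := by
        rw [tensorPow_transpose, ← tensorPow_mul, hg, tensorPow_one, Matrix.mul_one]
    _ = D * tensorPow n k g := by rw [← Matrix.mul_assoc, hD]

/-- for every perfect matching `β` of `[l+k]` (encoded by a fixed-point-free
involution `f`), the map `E_β := D_β` is `O(n)`-equivariant:
`g^{⊗l} ∘ E_β = E_β ∘ g^{⊗k}` for every orthogonal matrix `g`. -/
theorem Ematrix_orthogonal_equivariant (n k l : ℕ) (hn : 0 < n)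
    (f : Fin (l + k) → Fin (l + k)) (hf : ∀ x, f (f x) = x) (hf' : ∀ x, f x ≠ x)
    (g : Matrix (Fin n) (Fin n) ℝ) (hg : g.transpose * g = 1) :
    tensorPow n l g * Dmat n l k (matchingSetoid f hf) =
      Dmat n l k (matchingSetoid f hf) * tensorPow n k g :=
  Ematrix_orthogonal_equivariant_general n k l f hf hf' g hg
end
end
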